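/- Let (a,b) be a fictitious-play trajectory. Then for every T ≥ 5, the players' combined total payoff satisfies T − √(10T) ≤ Σ_{t=1}^T (u_A^t + u_B^t) ≤ T + √(10T). -/

import Mathlib

open MeasureTheory

/-- Bob's choice of the left or right piece. -/
inductive Choice
  | L
  | R
deriving DecidableEq

/-- The cumulative valuation `V(x) = ∫_0^x v`. -/
noncomputable def cumul (v : ℝ → ℝ) (x : ℝ) : ℝ := ∫ y in (0:ℝ)..x, v y

/-- `v` is an integrable value density on `[0,1]`, bounded between `lo` and `hi`,
integrating to `1`. -/
def IsDensity (lo hi : ℝ) (v : ℝ → ℝ) : Prop :=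
  IntervalIntegrable v volume 0 1 ∧
  (∀ x ∈ Set.Icc (0:ℝ) 1, lo ≤ v x ∧ v x ≤ hi) ∧
  (∫ y in (0:ℝ)..1, v y) = 1

/-- Alice's round-`t` utility: if Bob picks `L` she gets `[a_t,1]`, else `[0,a_t]`. -/
noncomputable def uA (vA : ℝ → ℝ) (a : ℕ → ℝ) (b : ℕ → Choice) (t : ℕ) : ℝ :=
  if b t = Choice.L then 1 - cumul vA (a t) else cumul vA (a t)

/-- Bob's round-`t` utility: if he picks `L` he gets `[0,a_t]`, else `[a_t,1]`. -/
noncomputable def uB (vB : ℝ → ℝ) (a : ℕ → ℝ) (b : ℕ → Choice) (t : ℕ) : ℝ :=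
  if b t = Choice.L then cumul vB (a t) else 1 - cumul vB (a t)

/-- `α_t = r_t − ℓ_t`: number of `R` choices minus number of `L` choices up to round `t`. -/
noncomputable def alphaFP (b : ℕ → Choice) (t : ℕ) : ℝ :=
  ∑ i ∈ Finset.Icc 1 t, (if b i = Choice.R then (1:ℝ) else -1)

/-- `β_t = Σ_{i=1}^t (2 V_B(a_i) − 1)`. -/
noncomputable def betaFP (vB : ℝ → ℝ) (a : ℕ → ℝ) (t : ℕ) : ℝ :=
  ∑ i ∈ Finset.Icc 1 t, (2 * cumul vB (a i) - 1)

/-- The radius `ρ_t = |α_t| + |β_t|`. -/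
noncomputable def rhoFP (vB : ℝ → ℝ) (a : ℕ → ℝ) (b : ℕ → Choice) (t : ℕ) : ℝ :=
  |alphaFP b t| + |betaFP vB a t|

/-- `(a,b)` is a fictitious-play trajectory. -/
def IsFictitiousPlay (vB : ℝ → ℝ) (a : ℕ → ℝ) (b : ℕ → Choice) : Prop :=
  ∀ t : ℕ,
    (0 < alphaFP b t → a (t+1) = 1) ∧
    (alphaFP b t < 0 → a (t+1) = 0) ∧
    (0 < betaFP vB a t → b (t+1) = Choice.L) ∧
    (betaFP vB a t < 0 → b (t+1) = Choice.R)

/-- Round `t` is axis-crossing. -/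
def AxisCrossing (vB : ℝ → ℝ) (a : ℕ → ℝ) (b : ℕ → Choice) (t : ℕ) : Prop :=
  alphaFP b t = 0 ∨
  (betaFP vB a t ≤ 0 ∧ 0 < betaFP vB a (t+1)) ∨
  (0 ≤ betaFP vB a t ∧ betaFP vB a (t+1) < 0)

/-! Only a round that follows a zero of `α` can make the two payoffs sum to something other
than `1`: otherwise Alice cuts at an endpoint, where both valuations agree. Between consecutive
zeros `z < z'` of `α` the sign `σ` of `α` is constant, so `β` moves by `σ` in every round, while
the radius `ρ = |α| + |β|` never decreases. Comparing `ρ (z + 1)` with `ρ z' = |β z'|` shows that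
the excursion lasts at least `2 |β z|` rounds, strictly more if round `z + 1` paid off, and at
most `2 |β z'|`. As `α` vanishes only at even times, after `M` paying rounds `|β| ≥ M` at the
next zero of `α`, which comes no earlier than round `M (M + 1)`. So at most `√T + 1` of the
first `T` rounds pay off, each by at most `1`. -/

open Finset

theorem pos_of_abs_step_le_one {f : ℕ → ℤ} (hf : ∀ n, |f (n + 1) - f n| ≤ 1) {m n : ℕ}
    (hmn : m ≤ n) (hm : 0 < f m) (hne : ∀ k ∈ Icc m n, f k ≠ 0) : 0 < f n := by
  induction n, hmn using Nat.le_induction with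
  | base => exact hm
  | succ n hmn ih =>
    have hn := ih fun k hk => hne k (Icc_subset_Icc_right n.le_succ hk)
    have hn1 := hne (n + 1) (right_mem_Icc.mpr (hmn.trans n.le_succ))
    have := abs_le.mp (hf n)
    omega

theorem exists_last_le {P : ℕ → Prop} [DecidablePred P] (h0 : P 0) (n : ℕ) :
    ∃ m ≤ n, P m ∧ ∀ k, m < k → k ≤ n → ¬ P k :=
  ⟨Nat.findGreatest P n, Nat.findGreatest_le n, Nat.findGreatest_spec (Nat.zero_le n) h0,
    fun _ hk hkn => Nat.findGreatest_is_greatest hk hkn⟩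

theorem sqrt_add_one_le_sqrt_ten_mul {x : ℝ} (hx : 1 ≤ x) : √x + 1 ≤ √(10 * x) := by
  have h3 : 3 * √x ≤ √(10 * x) :=
    Real.le_sqrt_of_sq_le (by rw [mul_pow, Real.sq_sqrt (by linarith)]; linarith)
  have h1 : 1 ≤ √x := Real.one_le_sqrt.mpr hx
  linarith

theorem cumul_zero (v : ℝ → ℝ) : cumul v 0 = 0 := intervalIntegral.integral_same

namespace IsDensity

variable {δ Δ : ℝ} {v : ℝ → ℝ} {x : ℝ}

theorem cumul_one (hv : IsDensity δ Δ v) : cumul v 1 = 1 := hv.2.2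

theorem intervalIntegrable (hv : IsDensity δ Δ v) {y : ℝ} (hx : x ∈ Set.Icc (0 : ℝ) 1)
    (hy : y ∈ Set.Icc (0 : ℝ) 1) : IntervalIntegrable v volume x y :=
  hv.1.mono_set <|
    Set.uIcc_subset_uIcc (Set.mem_uIcc_of_le hx.1 hx.2) (Set.mem_uIcc_of_le hy.1 hy.2)

theorem mul_sub_le_integral (hv : IsDensity δ Δ v) {y : ℝ} (hx : 0 ≤ x) (hxy : x ≤ y)
    (hy : y ≤ 1) : δ * (y - x) ≤ ∫ t in x..y, v t := by
  have hint := intervalIntegral.integral_mono_on hxy intervalIntegrable_const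
    (hv.intervalIntegrable ⟨hx, hxy.trans hy⟩ ⟨hx.trans hxy, hy⟩)
    fun t ht => (hv.2.1 t ⟨hx.trans ht.1, ht.2.trans hy⟩).1
  simpa [mul_comm] using hint

theorem mul_le_cumul (hv : IsDensity δ Δ v) (hx : x ∈ Set.Icc (0 : ℝ) 1) :
    δ * x ≤ cumul v x := by
  simpa [cumul] using hv.mul_sub_le_integral le_rfl hx.1 hx.2

theorem cumul_le_one_sub_mul (hv : IsDensity δ Δ v) (hx : x ∈ Set.Icc (0 : ℝ) 1) :
    cumul v x ≤ 1 - δ * (1 - x) := by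
  have hsplit := intervalIntegral.integral_interval_sub_left
    (hv.intervalIntegrable (Set.left_mem_Icc.mpr zero_le_one) (Set.right_mem_Icc.mpr zero_le_one))
    (hv.intervalIntegrable (Set.left_mem_Icc.mpr zero_le_one) hx)
  rw [← cumul, ← cumul, hv.cumul_one] at hsplit
  linarith [hv.mul_sub_le_integral hx.1 hx.2 le_rfl]

theorem cumul_mem_Icc (hδ : 0 ≤ δ) (hv : IsDensity δ Δ v) (hx : x ∈ Set.Icc (0 : ℝ) 1) :
    cumul v x ∈ Set.Icc (0 : ℝ) 1 :=
  ⟨by nlinarith [hv.mul_le_cumul hx, hx.1], by nlinarith [hv.cumul_le_one_sub_mul hx, hx.2]⟩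

theorem cumul_pos (hδ : 0 < δ) (hv : IsDensity δ Δ v) (hx : x ∈ Set.Icc (0 : ℝ) 1)
    (h0 : x ≠ 0) : 0 < cumul v x := by
  nlinarith [hv.mul_le_cumul hx, lt_of_le_of_ne hx.1 h0.symm]

theorem cumul_lt_one (hδ : 0 < δ) (hv : IsDensity δ Δ v) (hx : x ∈ Set.Icc (0 : ℝ) 1)
    (h1 : x ≠ 1) : cumul v x < 1 := by
  nlinarith [hv.cumul_le_one_sub_mul hx, lt_of_le_of_ne hx.2 h1]

end IsDensity

namespace FictitiousPlay

def alpha (b : ℕ → Choice) (t : ℕ) : ℤ :=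
  ∑ i ∈ Icc 1 t, if b i = Choice.R then 1 else -1

noncomputable def excess (vA vB : ℝ → ℝ) (a : ℕ → ℝ) (b : ℕ → Choice) (t : ℕ) : ℝ :=
  uA vA a b t + uB vB a b t - 1

def ExcessBound (vA vB : ℝ → ℝ) (a : ℕ → ℝ) (b : ℕ → Choice) (z M : ℕ) : Prop :=
  |∑ t ∈ Icc 1 z, excess vA vB a b t| ≤ M ∧ (M : ℝ) ≤ |betaFP vB a z| ∧ M * (M + 1) ≤ z

variable {δ Δ : ℝ} {vA vB : ℝ → ℝ} {a : ℕ → ℝ} {b : ℕ → Choice} {t : ℕ}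

@[simp] theorem alpha_zero (b : ℕ → Choice) : alpha b 0 = 0 := rfl

theorem alpha_succ (b : ℕ → Choice) (t : ℕ) :
    alpha b (t + 1) = alpha b t + if b (t + 1) = Choice.R then 1 else -1 :=
  sum_Icc_succ_top (by omega) _

theorem cast_alpha (b : ℕ → Choice) (t : ℕ) : (alpha b t : ℝ) = alphaFP b t := by
  rw [alpha, alphaFP, Int.cast_sum]
  exact sum_congr rfl fun i _ => by split <;> simp

theorem abs_alpha_succ_sub (b : ℕ → Choice) (t : ℕ) : |alpha b (t + 1) - alpha b t| = 1 := by
  rw [alpha_succ]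
  split <;> simp

theorem even_alpha_add (b : ℕ → Choice) (t : ℕ) : Even (alpha b t + t) := by
  induction t with
  | zero => simp
  | succ t ih =>
    obtain ⟨k, hk⟩ := ih
    rw [alpha_succ]
    split
    · exact ⟨k + 1, by push_cast; omega⟩
    · exact ⟨k, by push_cast; omega⟩

theorem even_of_alpha_eq_zero (h : alpha b t = 0) : Even t := by
  simpa [h, parity_simps] using even_alpha_add b t

theorem betaFP_succ (vB : ℝ → ℝ) (a : ℕ → ℝ) (t : ℕ) :
    betaFP vB a (t + 1) = betaFP vB a t + (2 * cumul vB (a (t + 1)) - 1) :=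
  sum_Icc_succ_top (by omega) _

theorem excess_eq : excess vA vB a b t = if b t = Choice.L
    then cumul vB (a t) - cumul vA (a t) else cumul vA (a t) - cumul vB (a t) := by
  unfold excess uA uB
  split <;> ring

theorem abs_excess_le_one (hδ : 0 ≤ δ) (hA : IsDensity δ Δ vA) (hB : IsDensity δ Δ vB)
    (ht : a t ∈ Set.Icc (0 : ℝ) 1) : |excess vA vB a b t| ≤ 1 := by
  obtain ⟨hA0, hA1⟩ := hA.cumul_mem_Icc hδ ht
  obtain ⟨hB0, hB1⟩ := hB.cumul_mem_Icc hδ ht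
  rw [excess_eq, abs_le]
  split <;> constructor <;> linarith

theorem abs_betaFP_succ_sub_le_one (hδ : 0 ≤ δ) (hB : IsDensity δ Δ vB)
    (ht : a (t + 1) ∈ Set.Icc (0 : ℝ) 1) :
    |betaFP vB a (t + 1) - betaFP vB a t| ≤ 1 := by
  obtain ⟨h0, h1⟩ := hB.cumul_mem_Icc hδ ht
  rw [betaFP_succ, abs_le]
  constructor <;> linarith

theorem alpha_step_mul_betaFP_step_le_one (hδ : 0 ≤ δ) (hB : IsDensity δ Δ vB)
    (ht : a (t + 1) ∈ Set.Icc (0 : ℝ) 1) :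
    ((alpha b (t + 1) - alpha b t : ℤ) : ℝ) * (betaFP vB a (t + 1) - betaFP vB a t) ≤ 1 := by
  refine (le_abs_self _).trans ?_
  rw [abs_mul, ← Int.cast_abs, abs_alpha_succ_sub, Int.cast_one, one_mul]
  exact abs_betaFP_succ_sub_le_one hδ hB ht

theorem alpha_step_mul_betaFP_step_lt_one (hδ : 0 < δ) (hA : IsDensity δ Δ vA)
    (hB : IsDensity δ Δ vB) (ht : a (t + 1) ∈ Set.Icc (0 : ℝ) 1)
    (hE : excess vA vB a b (t + 1) ≠ 0) :
    ((alpha b (t + 1) - alpha b t : ℤ) : ℝ) * (betaFP vB a (t + 1) - betaFP vB a t) < 1 := by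
  rw [betaFP_succ, alpha_succ, add_sub_cancel_left]
  rw [excess_eq] at hE
  cases hb : b (t + 1) <;> simp only [hb, reduceCtorEq, if_true, if_false] at hE ⊢
  · have ha0 : a (t + 1) ≠ 0 := fun h => hE (by rw [h, cumul_zero, cumul_zero, sub_self])
    have := hB.cumul_pos hδ ht ha0
    push_cast
    linarith
  · have ha1 : a (t + 1) ≠ 1 := fun h => hE (by rw [h, hA.cumul_one, hB.cumul_one, sub_self])
    have := hB.cumul_lt_one hδ ht ha1
    push_cast
    linarith

end FictitiousPlay

open FictitiousPlay

namespace IsFictitiousPlay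

variable {δ Δ : ℝ} {vA vB : ℝ → ℝ} {a : ℕ → ℝ} {b : ℕ → Choice} {t : ℕ}

theorem cut_eq_one (hfp : IsFictitiousPlay vB a b) (h : 0 < alpha b t) : a (t + 1) = 1 :=
  (hfp t).1 (by rw [← cast_alpha]; exact_mod_cast h)

theorem cut_eq_zero (hfp : IsFictitiousPlay vB a b) (h : alpha b t < 0) : a (t + 1) = 0 :=
  (hfp t).2.1 (by rw [← cast_alpha]; exact_mod_cast h)

theorem alpha_succ_of_betaFP_pos (hfp : IsFictitiousPlay vB a b) (h : 0 < betaFP vB a t) :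
    alpha b (t + 1) = alpha b t - 1 := by
  simp [alpha_succ, (hfp t).2.2.1 h, sub_eq_add_neg]

theorem alpha_succ_of_betaFP_neg (hfp : IsFictitiousPlay vB a b) (h : betaFP vB a t < 0) :
    alpha b (t + 1) = alpha b t + 1 := by
  simp [alpha_succ, (hfp t).2.2.2 h]

theorem betaFP_succ_of_alpha_pos (hfp : IsFictitiousPlay vB a b) (hB : IsDensity δ Δ vB)
    (h : 0 < alpha b t) : betaFP vB a (t + 1) = betaFP vB a t + 1 := by
  rw [betaFP_succ, hfp.cut_eq_one h, hB.cumul_one]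
  ring

theorem betaFP_succ_of_alpha_neg (hfp : IsFictitiousPlay vB a b) (h : alpha b t < 0) :
    betaFP vB a (t + 1) = betaFP vB a t - 1 := by
  rw [betaFP_succ, hfp.cut_eq_zero h, cumul_zero]
  ring

theorem excess_succ_eq_zero (hfp : IsFictitiousPlay vB a b) (hA : IsDensity δ Δ vA)
    (hB : IsDensity δ Δ vB) (h : alpha b t ≠ 0) : excess vA vB a b (t + 1) = 0 := by
  rcases h.lt_or_gt with h | h
  · rw [excess_eq, hfp.cut_eq_zero h, cumul_zero, cumul_zero]
    simp
  · rw [excess_eq, hfp.cut_eq_one h, hA.cumul_one, hB.cumul_one]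
    simp

theorem rhoFP_le_rhoFP_succ (hfp : IsFictitiousPlay vB a b) (hB : IsDensity δ Δ vB)
    (h : alpha b t ≠ 0) : rhoFP vB a b t ≤ rhoFP vB a b (t + 1) := by
  simp only [rhoFP, ← cast_alpha]
  have hstep : |(alpha b (t + 1) : ℝ) - alpha b t| = 1 := by
    exact_mod_cast abs_alpha_succ_sub b t
  obtain ⟨hlo, hhi⟩ := abs_le.mp hstep.le
  have := le_abs_self (alpha b (t + 1) : ℝ)
  have := neg_le_abs (alpha b (t + 1) : ℝ)
  rcases h.lt_or_gt with hα | hα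
  · rw [hfp.betaFP_succ_of_alpha_neg hα, abs_of_neg (Int.cast_lt_zero.mpr hα)]
    rcases lt_or_ge 0 (betaFP vB a t) with hβ | hβ
    · have : (alpha b (t + 1) : ℝ) = alpha b t - 1 := by
        exact_mod_cast hfp.alpha_succ_of_betaFP_pos hβ
      linarith [le_abs_self (betaFP vB a t - 1), abs_of_pos hβ]
    · linarith [neg_le_abs (betaFP vB a t - 1), abs_of_nonpos hβ]
  · rw [hfp.betaFP_succ_of_alpha_pos hB hα, abs_of_pos (Int.cast_pos.mpr hα)]
    rcases lt_or_ge (betaFP vB a t) 0 with hβ | hβ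
    · have : (alpha b (t + 1) : ℝ) = alpha b t + 1 := by
        exact_mod_cast hfp.alpha_succ_of_betaFP_neg hβ
      linarith [neg_le_abs (betaFP vB a t + 1), abs_of_neg hβ]
    · linarith [le_abs_self (betaFP vB a t + 1), abs_of_nonneg hβ]

theorem rhoFP_mono (hfp : IsFictitiousPlay vB a b) (hB : IsDensity δ Δ vB) {m n : ℕ}
    (hmn : m ≤ n) (hne : ∀ t ∈ Ico m n, alpha b t ≠ 0) : rhoFP vB a b m ≤ rhoFP vB a b n := by
  induction n, hmn using Nat.le_induction with
  | base => exact le_rfl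
  | succ n hmn ih =>
    exact (ih fun t ht => hne t (Ico_subset_Ico_right n.le_succ ht)).trans
      (hfp.rhoFP_le_rhoFP_succ hB (hne n (mem_Ico.mpr ⟨hmn, n.lt_succ_self⟩)))

theorem betaFP_succ_of_mul_alpha_pos (hfp : IsFictitiousPlay vB a b) (hB : IsDensity δ Δ vB)
    {σ : ℤ} (hσ : σ = 1 ∨ σ = -1) (h : 0 < σ * alpha b t) :
    betaFP vB a (t + 1) = betaFP vB a t + σ := by
  rcases hσ with rfl | rfl
  · simpa using hfp.betaFP_succ_of_alpha_pos hB (by simpa using h)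
  · simpa [sub_eq_add_neg] using hfp.betaFP_succ_of_alpha_neg (by simpa using h)

theorem betaFP_eq_add_mul (hfp : IsFictitiousPlay vB a b) (hB : IsDensity δ Δ vB) {σ : ℤ}
    (hσ : σ = 1 ∨ σ = -1) {m n : ℕ} (hmn : m ≤ n) (hpos : ∀ t ∈ Ico m n, 0 < σ * alpha b t) :
    betaFP vB a n = betaFP vB a m + σ * (n - m : ℝ) := by
  induction n, hmn using Nat.le_induction with
  | base => ring
  | succ n hmn ih =>
    rw [hfp.betaFP_succ_of_mul_alpha_pos hB hσ (hpos n (mem_Ico.mpr ⟨hmn, n.lt_succ_self⟩)),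
      ih fun t ht => hpos t (Ico_subset_Ico_right n.le_succ ht)]
    push_cast
    ring

theorem one_sub_alpha_mul_betaFP_succ (hfp : IsFictitiousPlay vB a b) (hz : alpha b t = 0) :
    1 - alpha b (t + 1) * betaFP vB a (t + 1) = |betaFP vB a t| +
      (1 - ((alpha b (t + 1) - alpha b t : ℤ) : ℝ) * (betaFP vB a (t + 1) - betaFP vB a t)) := by
  have hbob : (alpha b (t + 1) : ℝ) * betaFP vB a t = -|betaFP vB a t| := by
    rcases lt_trichotomy (betaFP vB a t) 0 with hβ | hβ | hβ
    · rw [hfp.alpha_succ_of_betaFP_neg hβ, hz, abs_of_neg hβ]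
      simp
    · simp [hβ]
    · rw [hfp.alpha_succ_of_betaFP_pos hβ, hz, abs_of_pos hβ]
      simp
  rw [hz]
  push_cast
  linarith

theorem sum_excess_eq (hfp : IsFictitiousPlay vB a b) (hA : IsDensity δ Δ vA)
    (hB : IsDensity δ Δ vB) {z s : ℕ} (hzs : z < s) (hne : ∀ t ∈ Ioo z s, alpha b t ≠ 0) :
    ∑ t ∈ Icc 1 s, excess vA vB a b t =
      ∑ t ∈ Icc 1 z, excess vA vB a b t + excess vA vB a b (z + 1) := by
  induction s, hzs using Nat.le_induction with
  | base => exact sum_Icc_succ_top (by omega) _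
  | succ s hzs ih =>
    rw [sum_Icc_succ_top (by omega), ih fun t ht => hne t (Ioo_subset_Ioo_right s.le_succ ht),
      hfp.excess_succ_eq_zero hA hB (hne s (mem_Ioo.mpr ⟨hzs, s.lt_succ_self⟩)), add_zero]

theorem excursion_bounds (hfp : IsFictitiousPlay vB a b) (hB : IsDensity δ Δ vB) {z z' : ℕ}
    (hzz' : z < z') (hz : alpha b z = 0) (hz' : alpha b z' = 0)
    (hne : ∀ t ∈ Ioo z z', alpha b t ≠ 0) :
    2 * (1 - alpha b (z + 1) * betaFP vB a (z + 1)) ≤ (z' - z : ℝ) ∧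
      (z' - z : ℝ) ≤ 2 * |betaFP vB a z'| := by
  set σ := alpha b (z + 1) with hσdef
  have hσ : σ = 1 ∨ σ = -1 := by
    have := abs_alpha_succ_sub b z
    rwa [hz, sub_zero, abs_eq zero_le_one] at this
  have hσ0 : σ ≠ 0 := by rcases hσ with h | h <;> simp [h]
  have hz1 : z + 1 < z' := lt_of_le_of_ne hzz' fun h => hσ0 (by rw [hσdef, h, hz'])
  have hpos : ∀ t ∈ Ico (z + 1) z', 0 < σ * alpha b t := fun t ht =>
    pos_of_abs_step_le_one (f := fun k => σ * alpha b k)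
      (fun n => by rw [← mul_sub, abs_mul, abs_alpha_succ_sub]; rcases hσ with h | h <;> simp [h])
      (mem_Ico.mp ht).1 (mul_self_pos.mpr hσ0)
      fun k hk => mul_ne_zero hσ0 (hne k (mem_Ioo.mpr ⟨(mem_Icc.mp hk).1, by
        have := (mem_Ico.mp ht).2; have := (mem_Icc.mp hk).2; omega⟩))
  have hρ := hfp.rhoFP_mono hB hz1.le fun t ht => hne t (mem_Ioo.mpr ⟨by
    have := (mem_Ico.mp ht).1; omega, (mem_Ico.mp ht).2⟩)
  have hβ := hfp.betaFP_eq_add_mul hB hσ hz1.le hpos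
  have hg : (z : ℝ) + 1 < z' := by exact_mod_cast hz1
  simp only [rhoFP, ← cast_alpha, hz', ← hσdef, hβ] at hρ
  rw [hβ]
  push_cast at hρ ⊢
  -- `hρ : 1 + |β (z + 1)| ≤ |β (z + 1) + σ (z' - (z + 1))|`
  rcases hσ with h | h <;> simp only [h, Int.cast_one, Int.cast_neg, abs_one, abs_neg,
    abs_zero] at hρ ⊢ <;>
    cases abs_cases (betaFP vB a (z + 1)) <;>
    cases abs_cases (betaFP vB a (z + 1) + 1 * (z' - (z + 1))) <;>
    cases abs_cases (betaFP vB a (z + 1) + -1 * (z' - (z + 1))) <;>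
    constructor <;> linarith

theorem exists_excessBound_of_excursion (hfp : IsFictitiousPlay vB a b) (hδ : 0 < δ)
    (hA : IsDensity δ Δ vA) (hB : IsDensity δ Δ vB)
    (ha : ∀ t : ℕ, 1 ≤ t → a t ∈ Set.Icc (0 : ℝ) 1) {z z' M : ℕ} (hzz' : z < z')
    (hz : alpha b z = 0) (hz' : alpha b z' = 0) (hne : ∀ t ∈ Ioo z z', alpha b t ≠ 0)
    (hM : ExcessBound vA vB a b z M) : ∃ M', ExcessBound vA vB a b z' M' := by
  obtain ⟨hsum, hMβ, hMz⟩ := hM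
  obtain ⟨hlen, hβ⟩ := hfp.excursion_bounds hB hzz' hz hz' hne
  have hcross := hfp.one_sub_alpha_mul_betaFP_succ hz
  have hsplit := hfp.sum_excess_eq hA hB hzz' hne
  have ha1 := ha (z + 1) (by omega)
  have hg : ((z' - z : ℕ) : ℝ) = z' - z := Nat.cast_sub hzz'.le
  by_cases hE : excess vA vB a b (z + 1) = 0
  · have := alpha_step_mul_betaFP_step_le_one (b := b) hδ.le hB ha1
    exact ⟨M, by rwa [hsplit, hE, add_zero], by linarith, by omega⟩
  have := alpha_step_mul_betaFP_step_lt_one hδ hA hB ha1 hE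
  have hgap : 2 * M + 2 ≤ z' - z := by
    have : 2 * M < z' - z := by
      have : ((2 * M : ℕ) : ℝ) < ((z' - z : ℕ) : ℝ) := by push_cast [hg]; linarith
      exact_mod_cast this
    obtain ⟨k, hk⟩ := even_of_alpha_eq_zero hz
    obtain ⟨k', hk'⟩ := even_of_alpha_eq_zero hz'
    omega
  have hgapR : (2 * M + 2 : ℝ) ≤ z' - z := by rw [← hg]; exact_mod_cast hgap
  refine ⟨M + 1, ?_, by push_cast; linarith, ?_⟩
  · rw [hsplit]
    push_cast
    exact (abs_add_le _ _).trans (add_le_add hsum (abs_excess_le_one hδ.le hA hB ha1))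
  · calc (M + 1) * (M + 1 + 1) = M * (M + 1) + (2 * M + 2) := by ring
      _ ≤ z + (z' - z) := add_le_add hMz hgap
      _ = z' := by omega

theorem exists_excessBound (hfp : IsFictitiousPlay vB a b) (hδ : 0 < δ)
    (hA : IsDensity δ Δ vA) (hB : IsDensity δ Δ vB)
    (ha : ∀ t : ℕ, 1 ≤ t → a t ∈ Set.Icc (0 : ℝ) 1) {z : ℕ} (hz : alpha b z = 0) :
    ∃ M, ExcessBound vA vB a b z M := by
  induction z using Nat.strong_induction_on with
  | _ z ih =>
    obtain rfl | hz0 := z.eq_zero_or_pos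
    · exact ⟨0, by simp [ExcessBound]⟩
    obtain ⟨z₀, hz₀z, hz₀, hlast⟩ :=
      exists_last_le (P := fun t => alpha b t = 0) (alpha_zero b) (z - 1)
    obtain ⟨M, hM⟩ := ih z₀ (by omega) hz₀
    refine hfp.exists_excessBound_of_excursion hδ hA hB ha (by omega) hz₀ hz
      (fun t ht => hlast t (mem_Ioo.mp ht).1 ?_) hM
    have := (mem_Ioo.mp ht).2
    omega

theorem abs_sum_excess_le (hfp : IsFictitiousPlay vB a b) (hδ : 0 < δ)
    (hA : IsDensity δ Δ vA) (hB : IsDensity δ Δ vB)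
    (ha : ∀ t : ℕ, 1 ≤ t → a t ∈ Set.Icc (0 : ℝ) 1) (T : ℕ) :
    |∑ t ∈ Icc 1 T, excess vA vB a b t| ≤ √T + 1 := by
  obtain ⟨z, hzT, hz, hlast⟩ := exists_last_le (P := fun t => alpha b t = 0) (alpha_zero b) T
  obtain ⟨M, hsum, -, hMz⟩ := hfp.exists_excessBound hδ hA hB ha hz
  have hM : (M : ℝ) ≤ √T := Real.le_sqrt_of_sq_le (by exact_mod_cast (by nlinarith : M ^ 2 ≤ T))
  suffices |∑ t ∈ Icc 1 T, excess vA vB a b t| ≤ M + 1 by linarith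
  rcases hzT.eq_or_lt with rfl | hzT
  · linarith
  rw [hfp.sum_excess_eq hA hB hzT fun t ht => hlast t (mem_Ioo.mp ht).1 (mem_Ioo.mp ht).2.le]
  exact (abs_add_le _ _).trans (add_le_add hsum (abs_excess_le_one hδ.le hA hB (ha _ (by omega))))

end IsFictitiousPlay

theorem total_payoff_bounds_general
    (δ Δ : ℝ) (hδ : 0 < δ)
    (vA vB : ℝ → ℝ) (hA : IsDensity δ Δ vA) (hB : IsDensity δ Δ vB)
    (a : ℕ → ℝ) (b : ℕ → Choice)
    (ha : ∀ t : ℕ, 1 ≤ t → a t ∈ Set.Icc (0:ℝ) 1)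
    (hfp : IsFictitiousPlay vB a b)
    (T : ℕ) :
    (T : ℝ) - Real.sqrt (10 * T) ≤ ∑ t ∈ Finset.Icc 1 T, (uA vA a b t + uB vB a b t) ∧
    ∑ t ∈ Finset.Icc 1 T, (uA vA a b t + uB vB a b t) ≤ (T : ℝ) + Real.sqrt (10 * T) := by
  obtain rfl | hT := T.eq_zero_or_pos
  · simp
  have hsum : ∑ t ∈ Icc 1 T, (uA vA a b t + uB vB a b t) =
      T + ∑ t ∈ Icc 1 T, excess vA vB a b t := by
    simp [excess, sum_sub_distrib]
  have hbound := (hfp.abs_sum_excess_le hδ hA hB ha T).trans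
    (sqrt_add_one_le_sqrt_ten_mul (by exact_mod_cast hT))
  rw [hsum]
  constructor <;> linarith [abs_le.mp hbound]

/-- Under fictitious play, for `T ≥ 5` the combined total payoff satisfies
`T − √(10T) ≤ Σ (u_A^t + u_B^t) ≤ T + √(10T)`. -/
theorem total_payoff_bounds
    (δ Δ : ℝ) (hδ : 0 < δ) (hδΔ : δ ≤ Δ)
    (vA vB : ℝ → ℝ) (hA : IsDensity δ Δ vA) (hB : IsDensity δ Δ vB)
    (a : ℕ → ℝ) (b : ℕ → Choice)
    (ha : ∀ t : ℕ, 1 ≤ t → a t ∈ Set.Icc (0:ℝ) 1)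
    (hfp : IsFictitiousPlay vB a b)
    (T : ℕ) (hT : 5 ≤ T) :
    (T : ℝ) - Real.sqrt (10 * T) ≤ ∑ t ∈ Finset.Icc 1 T, (uA vA a b t + uB vB a b t) ∧
    ∑ t ∈ Finset.Icc 1 T, (uA vA a b t + uB vB a b t) ≤ (T : ℝ) + Real.sqrt (10 * T) :=
  total_payoff_bounds_general δ Δ hδ vA vB hA hB a b ha hfp T
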